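/- Let B ⊆ A × A^d be a basic set and for i ∈ A write B^(i) = {w ∈ A^d : (i,w) ∈ B}. Suppose there exists l ∈ A such that B^(i) ⊆ B^(l) for all i ∈ A (i.e., the associated system of recurrences is of dominant type with dominant index l), that the constant word (l,l,…,l) belongs to B^(l), and that |B^(l)| ≥ 2. Then the entropy limit of X^B exists and equals ln d, i.e., ln(ln |B_n(X^B)|)/n → ln d as n → ∞. -/

import Mathlib

/-! Fewer than `d ^ n` nodes have depth `< n`, so there are at most `k ^ d ^ n` blocks of height
`n`. Conversely, label every node by `l` except those of depth `n - 1`, and give each of the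
`d ^ (n - 2)` sibling groups at that depth an arbitrary word of `B^(l)`; since
`(l, …, l) ∈ B^(l)` these are all blocks, at least `2 ^ d ^ (n - 2)` of them. Both bounds are
doubly exponential with base `d`, so `ln ln |B_n| / n → ln d`. -/

open Filter Real

/-- The set of `n`-blocks of the Markov tree-shift on `d`-ary trees over the alphabet
`Fin k` with basic set `B ⊆ A × A^d`: labelings of the words of length `< n` such that
every node together with its `d` children forms a pattern in `B`. -/
def Block (d k : ℕ) (B : Finset (Fin k × (Fin d → Fin k))) (n : ℕ) :
    Set ({w : List (Fin d) // w.length < n} → Fin k) :=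
  {u | ∀ (v : List (Fin d)) (h : v.length + 2 ≤ n),
    (u ⟨v, by omega⟩, fun j => u ⟨v ++ [j], by simp; omega⟩) ∈ B}

/-- The `n`-blocks whose root is labeled `i`. -/
def BlockRoot (d k : ℕ) (B : Finset (Fin k × (Fin d → Fin k))) (i : Fin k) (n : ℕ) :
    Set ({w : List (Fin d) // w.length < n} → Fin k) :=
  {u | u ∈ Block d k B n ∧ ∀ h : 0 < n, u ⟨[], by simpa using h⟩ = i}

open Topology

instance (α : Type*) [Finite α] (n : ℕ) : Finite {w : List α // w.length < n} :=
  (List.finite_length_lt α n).to_subtype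

instance (α : Type*) [Finite α] (n : ℕ) : Finite {w : List α // w.length = n} :=
  (List.finite_length_eq α n).to_subtype

lemma card_list_length_eq (α : Type*) [Fintype α] (n : ℕ) :
    Nat.card {w : List α // w.length = n} = Fintype.card α ^ n :=
  (Nat.card_eq_fintype_card (α := List.Vector α n)).trans (card_vector n)

lemma card_list_length_lt_lt_card_pow (α : Type*) [Fintype α] (hα : 2 ≤ Fintype.card α)
    (n : ℕ) :
    Nat.card {w : List α // w.length < n} < Fintype.card α ^ n := by
  have e := Equiv.sigmaSubtypeFiberEquivSubtype (List.length (α := α))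
    (p := (·.length < n)) (q := (· ∈ Finset.range n)) fun _ => Finset.mem_range.symm
  rw [← Nat.card_congr e, Nat.card_sigma, Finset.sum_coe_sort (Finset.range n)
    (fun i => Nat.card {w : List α // w.length = i})]
  simp only [card_list_length_eq]
  exact Nat.geomSum_lt hα fun _ => Finset.mem_range.mp

lemma card_block_le {d k : ℕ} (hd : 2 ≤ d) (hk : 1 ≤ k)
    (B : Finset (Fin k × (Fin d → Fin k))) (n : ℕ) : Nat.card (Block d k B n) ≤ k ^ d ^ n :=
  calc Nat.card (Block d k B n)
      ≤ Nat.card ({w : List (Fin d) // w.length < n} → Fin k) := Finite.card_subtype_le _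
    _ = k ^ Nat.card {w : List (Fin d) // w.length < n} := by simp [Nat.card_fun]
    _ ≤ k ^ d ^ n := Nat.pow_le_pow_right hk
        (by simpa using (card_list_length_lt_lt_card_pow (Fin d) (by simpa) n).le)

section LevelLabeling

variable {d k : ℕ} (l : Fin k) (m : ℕ)

def levelLabeling (f : {w : List (Fin d) // w.length = m} → Fin d → Fin k)
    (v : {w : List (Fin d) // w.length < m + 2}) : Fin k :=
  if h : v.1.length = m + 1 then
    f ⟨v.1.dropLast, by simp [h]⟩ (v.1.getLast (by rintro he; simp [he] at h))
  else l

variable {l m}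

lemma levelLabeling_of_length_le (f) {v : {w : List (Fin d) // w.length < m + 2}}
    (hv : v.1.length ≤ m) : levelLabeling l m f v = l :=
  dif_neg (by omega)

lemma levelLabeling_append_singleton (f) (v : {w : List (Fin d) // w.length = m}) (j : Fin d)
    (h : (v.1 ++ [j]).length < m + 2) : levelLabeling l m f ⟨v.1 ++ [j], h⟩ = f v j := by
  have hv : (v.1 ++ [j]).dropLast = v.1 := List.dropLast_concat ..
  simp [levelLabeling, v.2, hv]

lemma levelLabeling_injective : Function.Injective (levelLabeling (d := d) l m) := by
  intro f g h
  funext v j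
  have hlen : (v.1 ++ [j]).length < m + 2 := by simp [v.2]
  simpa only [levelLabeling_append_singleton] using congr_fun h ⟨v.1 ++ [j], hlen⟩

lemma levelLabeling_mem_block {B : Finset (Fin k × (Fin d → Fin k))}
    (hconst : (l, fun _ : Fin d => l) ∈ B) {f} (hf : ∀ v, (l, f v) ∈ B) :
    levelLabeling l m f ∈ Block d k B (m + 2) := by
  intro v hv
  have hvm : v.length ≤ m := by omega
  rw [levelLabeling_of_length_le f hvm]
  rcases hvm.eq_or_lt with hvm | hvm
  · simpa only [levelLabeling_append_singleton f ⟨v, hvm⟩] using hf ⟨v, hvm⟩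
  · have hchild (j : Fin d) : levelLabeling l m f ⟨v ++ [j], by simp; omega⟩ = l :=
      levelLabeling_of_length_le f (by simp; omega)
    simpa only [hchild] using hconst

end LevelLabeling

lemma card_pow_le_card_block {d k : ℕ} {B : Finset (Fin k × (Fin d → Fin k))} {l : Fin k}
    (hconst : (l, fun _ : Fin d => l) ∈ B) (m : ℕ) :
    (Finset.univ.filter fun w : Fin d → Fin k => (l, w) ∈ B).card ^ d ^ m
      ≤ Nat.card (Block d k B (m + 2)) := by
  let F := {w : List (Fin d) // w.length = m} → {w : Fin d → Fin k // (l, w) ∈ B}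
  let toBlock (f : F) : Block d k B (m + 2) :=
    ⟨levelLabeling l m (fun v => (f v).1), levelLabeling_mem_block hconst fun v => (f v).2⟩
  have hinj : Function.Injective toBlock := fun f g h => by
    have hfg : (fun v => (f v).1) = fun v => (g v).1 :=
      levelLabeling_injective (congrArg Subtype.val h)
    funext v
    exact Subtype.ext (congrFun hfg v)
  calc _ = Nat.card F := by
        simp [F, Nat.card_fun, card_list_length_eq, Fintype.card_subtype]
    _ ≤ _ := Nat.card_le_card_of_injective toBlock hinj

lemma log_log_pow_pow {b : ℝ} (hb : 1 < b) {d : ℕ} (hd : 0 < d) (N : ℕ) :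
    log (log (b ^ d ^ N)) = N * log d + log (log b) := by
  rw [log_pow, log_mul (by positivity) (log_pos hb).ne', Nat.cast_pow, log_pow]

lemma log_log_le_log_log {x y : ℝ} (hx : 1 < x) (hxy : x ≤ y) : log (log x) ≤ log (log y) :=
  log_le_log (log_pos hx) (log_le_log (by linarith) hxy)

theorem tendsto_log_log_div_of_le_pow_pow {a : ℕ → ℝ} {b c : ℝ} {d m : ℕ}
    (hb : 1 < b) (hc : 1 < c) (hd : 0 < d)
    (hlo : ∀ᶠ n in atTop, b ^ d ^ (n - m) ≤ a n) (hhi : ∀ᶠ n in atTop, a n ≤ c ^ d ^ n) :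
    Tendsto (fun n : ℕ => log (log (a n)) / n) atTop (𝓝 (log d)) := by
  have tendsto_add_div (C : ℝ) :
      Tendsto (fun n : ℕ => log d + C / n) atTop (𝓝 (log d)) := by
    simpa using tendsto_const_nhds.add (tendsto_const_div_atTop_nhds_zero_nat C)
  have one_lt_pow (n : ℕ) : 1 < b ^ d ^ (n - m) := one_lt_pow₀ hb (by positivity)
  refine tendsto_of_tendsto_of_tendsto_of_le_of_le' (tendsto_add_div (log (log b) - m * log d))
    (tendsto_add_div (log (log c))) ?_ ?_
  · filter_upwards [hlo, eventually_gt_atTop m] with n hn hmn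
    have hn0 : (0 : ℝ) < n := by exact_mod_cast hmn.trans_le' (Nat.zero_le m)
    calc log d + (log (log b) - m * log d) / n
        = log (log (b ^ d ^ (n - m))) / n := by
          rw [log_log_pow_pow hb hd, Nat.cast_sub hmn.le]
          field_simp
          ring
      _ ≤ log (log (a n)) / n :=
          div_le_div_of_nonneg_right (log_log_le_log_log (one_lt_pow n) hn) hn0.le
  · filter_upwards [hlo, hhi, eventually_gt_atTop 0] with n hn hn' hpos
    have hn0 : (0 : ℝ) < n := by exact_mod_cast hpos
    calc log (log (a n)) / n ≤ log (log (c ^ d ^ n)) / n :=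
          div_le_div_of_nonneg_right
            (log_log_le_log_log ((one_lt_pow n).trans_le hn) hn') hn0.le
      _ = log d + log (log c) / n := by
          rw [log_log_pow_pow hc hd]
          field_simp

theorem entropy_eq_log_d_of_dominant_with_full_degree_general (d k : ℕ) (hd : 2 ≤ d) (hk : 2 ≤ k)
    (B : Finset (Fin k × (Fin d → Fin k))) (l : Fin k)
    (hconst : (l, fun _ : Fin d => l) ∈ B)
    (hcard : 2 ≤ (Finset.univ.filter fun w : Fin d → Fin k => (l, w) ∈ B).card) :
    Tendsto (fun n : ℕ => Real.log (Real.log (Nat.card (Block d k B n))) / n)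
      atTop (nhds (Real.log d)) := by
  refine tendsto_log_log_div_of_le_pow_pow (b := 2) (c := k) (m := 2) one_lt_two
    (by exact_mod_cast hk) (by omega) ?_ (.of_forall fun n => ?_)
  · filter_upwards [eventually_ge_atTop 2] with n hn
    obtain ⟨m, rfl⟩ := Nat.exists_eq_add_of_le' hn
    exact_mod_cast (Nat.pow_le_pow_left hcard _).trans (card_pow_le_card_block hconst m)
  · exact_mod_cast card_block_le hd (by omega) B n

/-- If the basic set `B` is of dominant type with dominant index `l` (every children-word
allowed under any symbol is allowed under `l`), the constant word `(l,…,l)` is allowed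
under `l`, and `l` admits at least two children-words, then the entropy limit exists and
equals `ln d`. -/
theorem entropy_eq_log_d_of_dominant_with_full_degree (d k : ℕ) (hd : 2 ≤ d) (hk : 2 ≤ k)
    (B : Finset (Fin k × (Fin d → Fin k))) (l : Fin k)
    (hdom : ∀ (i : Fin k) (w : Fin d → Fin k), (i, w) ∈ B → (l, w) ∈ B)
    (hconst : (l, fun _ : Fin d => l) ∈ B)
    (hcard : 2 ≤ (Finset.univ.filter fun w : Fin d → Fin k => (l, w) ∈ B).card) :
    Tendsto (fun n : ℕ => Real.log (Real.log (Nat.card (Block d k B n))) / n)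
      atTop (nhds (Real.log d)) :=
  entropy_eq_log_d_of_dominant_with_full_degree_general d k hd hk B l hconst hcard
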